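/- arXiv:1104.3589 — 2 statements merged into one kernel-verified Lean document; each statement's English description precedes it below -/
import Mathlib

section
/- The Landau velocity field v_c, defined for |c|>1 by v_c^1(x)=2(c|x|^2-2x_1|x|+c x_1^2)/(|x|(c|x|-x_1)^2), v_c^2(x)=2 x_2(c x_1-|x|)/(|x|(c|x|-x_1)^2), v_c^3(x)=2 x_3(c x_1-|x|)/(|x|(c|x|-x_1)^2), is divergence free at every point x in R^3 \ {0}. -/
/-! The partial derivatives `∂ₖvₖ`, `k = 1, 2`, depend on `x` only through `|x|`, `x₀` and `xₖ²`,
so in the divergence `x₁, x₂` enter only through `x₁² + x₂² = |x|² - x₀²`; what remains is a rational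
identity in `c`, `|x|`, `x₀`, whose denominators `|x|` and `c|x| - x₀` do not vanish because
`|x₀| ≤ |x| < |c||x|`. Coordinates are indexed from `0`, so `x₀` is the paper's `x_1`. -/

open MeasureTheory Filter Finset

noncomputable section

abbrev E3 : Type := EuclideanSpace ℝ (Fin 3)

def pd (j : Fin 3) (f : E3 → ℝ) (x : E3) : ℝ := fderiv ℝ f x (EuclideanSpace.single j 1)

def landauV (c : ℝ) (x : E3) : E3 := WithLp.toLp 2 fun k =>
  if k = 0 then
    2 * (c * ‖x‖ ^ 2 - 2 * x 0 * ‖x‖ + c * x 0 ^ 2) / (‖x‖ * (c * ‖x‖ - x 0) ^ 2)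
  else
    2 * x k * (c * x 0 - ‖x‖) / (‖x‖ * (c * ‖x‖ - x 0) ^ 2)

def landauP (c : ℝ) (x : E3) : ℝ := 4 * (c * x 0 - ‖x‖) / (‖x‖ * (c * ‖x‖ - x 0) ^ 2)

def gradSq (W : E3 → E3) (x : E3) : ℝ := ∑ j : Fin 3, ∑ k : Fin 3, (pd j (fun y => W y k) x) ^ 2

theorem HasFDerivAt.div {𝕜 F : Type*} [NontriviallyNormedField 𝕜] [NormedAddCommGroup F]
    [NormedSpace 𝕜 F] {f g : F → 𝕜} {f' g' : F →L[𝕜] 𝕜} {x : F} (hf : HasFDerivAt f f' x)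
    (hg : HasFDerivAt g g' x) (hx : g x ≠ 0) :
    HasFDerivAt (fun y => f y / g y) ((g x ^ 2)⁻¹ • (g x • f' - f x • g')) x := by
  have h := hf.fun_mul ((hasDerivAt_inv hx).comp_hasFDerivAt x hg)
  simp only [Function.comp_apply, ← div_eq_mul_inv] at h
  refine h.congr_fderiv ?_
  ext v
  simp only [add_apply, smul_apply, sub_apply, smul_eq_mul]
  field_simp
  ring

theorem hasFDerivAt_norm_of_ne_zero {F : Type*} [NormedAddCommGroup F] [InnerProductSpace ℝ F]
    {x : F} (hx : x ≠ 0) : HasFDerivAt (‖·‖) (‖x‖⁻¹ • innerSL ℝ x) x := by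
  have h := (hasStrictFDerivAt_norm_sq x).hasFDerivAt.sqrt (by positivity)
  simp only [Real.sqrt_sq (norm_nonneg _)] at h
  refine h.congr_fderiv ?_
  ext v
  simp only [smul_apply, coe_innerSL_apply, smul_eq_mul, nsmul_eq_mul, Nat.cast_ofNat]
  field_simp

theorem mul_norm_sub_apply_ne_zero {ι : Type*} [Fintype ι] {c : ℝ} (hc : 1 < |c|)
    {x : EuclideanSpace ℝ ι} (hx : x ≠ 0) (i : ι) : c * ‖x‖ - x i ≠ 0 := by
  intro h
  have hle : |c| * ‖x‖ ≤ ‖x‖ :=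
    calc |c| * ‖x‖ = |x i| := by rw [← sub_eq_zero.mp h, abs_mul, abs_norm]
      _ ≤ ‖x‖ := by simpa using PiLp.norm_apply_le x i
  exact hle.not_gt (lt_mul_of_one_lt_left (norm_pos_iff.mpr hx) hc)

theorem pd_eq_of_hasFDerivAt {f : E3 → ℝ} {f' : E3 →L[ℝ] ℝ} {x : E3} (h : HasFDerivAt f f' x)
    (j : Fin 3) : pd j f x = f' (EuclideanSpace.single j 1) := by
  rw [pd, h.fderiv]

section LandauPartials

variable {c : ℝ} {x : E3}

theorem pd_landauV_zero (hc : 1 < |c|) (hx : x ≠ 0) :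
    pd 0 (fun y => landauV c y 0) x =
      2 * (4 * c * x 0 * ‖x‖ - 2 * x 0 ^ 2 - 2 * ‖x‖ ^ 2) / (‖x‖ ^ 2 * (c * ‖x‖ - x 0) ^ 2)
        - 2 * (c * ‖x‖ ^ 2 - 2 * x 0 * ‖x‖ + c * x 0 ^ 2) * (3 * c * x 0 * ‖x‖ - x 0 ^ 2 - 2 * ‖x‖ ^ 2)
          / (‖x‖ ^ 3 * (c * ‖x‖ - x 0) ^ 3) := by
  have hr := norm_pos_iff.mpr hx
  have hD := mul_norm_sub_apply_ne_zero hc hx 0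
  have hN := hasFDerivAt_norm_of_ne_zero hx
  have h0 : HasFDerivAt (fun y : E3 => y 0) (EuclideanSpace.proj 0 : E3 →L[ℝ] ℝ) x :=
    (EuclideanSpace.proj 0 : E3 →L[ℝ] ℝ).hasFDerivAt
  have hv := (((((hN.pow 2).const_mul c).fun_sub ((h0.fun_mul hN).const_mul 2)).fun_add
      ((h0.pow 2).const_mul c)).const_mul 2).div
    (hN.fun_mul (((hN.const_mul c).fun_sub h0).pow 2)) (mul_ne_zero hr.ne' (pow_ne_zero 2 hD))
  have hV : (fun y => landauV c y 0) = fun y =>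
      2 * (c * ‖y‖ ^ 2 - 2 * (y 0 * ‖y‖) + c * y 0 ^ 2) / (‖y‖ * (c * ‖y‖ - y 0) ^ 2) := by
    ext y
    simp [landauV, mul_assoc]
  rw [hV, pd_eq_of_hasFDerivAt hv]
  simp only [Nat.add_one_sub_one, pow_one, nsmul_eq_mul, Nat.cast_ofNat, smul_add, smul_apply,
    sub_apply, add_apply, coe_innerSL_apply, EuclideanSpace.inner_single_right, Real.ringHom_apply,
    one_mul, smul_eq_mul, PiLp.proj_apply, PiLp.single_eq_same, mul_one]
  field_simp
  ring

theorem pd_landauV_of_ne_zero (hc : 1 < |c|) (hx : x ≠ 0) {k : Fin 3} (hk : k ≠ 0) :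
    pd k (fun y => landauV c y k) x =
      2 * (c * x 0 - ‖x‖) / (‖x‖ * (c * ‖x‖ - x 0) ^ 2) - 2 * x k ^ 2 / (‖x‖ ^ 2 * (c * ‖x‖ - x 0) ^ 2)
        - 2 * x k ^ 2 * (c * x 0 - ‖x‖) * (3 * c * ‖x‖ - x 0) / (‖x‖ ^ 3 * (c * ‖x‖ - x 0) ^ 3) := by
  have hr := norm_pos_iff.mpr hx
  have hD := mul_norm_sub_apply_ne_zero hc hx 0
  have hN := hasFDerivAt_norm_of_ne_zero hx
  have h0 : HasFDerivAt (fun y : E3 => y 0) (EuclideanSpace.proj 0 : E3 →L[ℝ] ℝ) x :=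
    (EuclideanSpace.proj 0 : E3 →L[ℝ] ℝ).hasFDerivAt
  have hk' : HasFDerivAt (fun y : E3 => y k) (EuclideanSpace.proj k : E3 →L[ℝ] ℝ) x :=
    (EuclideanSpace.proj k : E3 →L[ℝ] ℝ).hasFDerivAt
  have hv := ((hk'.const_mul 2).fun_mul ((h0.const_mul c).fun_sub hN)).div
    (hN.fun_mul (((hN.const_mul c).fun_sub h0).pow 2)) (mul_ne_zero hr.ne' (pow_ne_zero 2 hD))
  have hV : (fun y => landauV c y k) = fun y =>
      2 * y k * (c * y 0 - ‖y‖) / (‖y‖ * (c * ‖y‖ - y 0) ^ 2) := by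
    ext y
    simp [landauV, hk]
  rw [hV, pd_eq_of_hasFDerivAt hv]
  simp only [smul_add, Nat.add_one_sub_one, pow_one, nsmul_eq_mul, Nat.cast_ofNat, smul_apply,
    sub_apply, add_apply, PiLp.proj_apply, PiLp.single_eq_of_ne' 2 hk, smul_eq_mul, mul_zero,
    coe_innerSL_apply, EuclideanSpace.inner_single_right, Real.ringHom_apply, one_mul, zero_sub,
    mul_neg, PiLp.single_eq_same, mul_one, sub_zero]
  field_simp
  ring

end LandauPartials

theorem landau_div_free (c : ℝ) (hc : 1 < |c|) (x : E3) (hx : x ≠ 0) :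
    ∑ j : Fin 3, pd j (fun y => landauV c y j) x = 0 := by
  have hD := mul_norm_sub_apply_ne_zero hc hx 0
  have hsq : x 2 ^ 2 = ‖x‖ ^ 2 - x 0 ^ 2 - x 1 ^ 2 := by
    rw [EuclideanSpace.real_norm_sq_eq, Fin.sum_univ_three]
    ring
  rw [Fin.sum_univ_three, pd_landauV_zero hc hx, pd_landauV_of_ne_zero hc hx one_ne_zero,
    pd_landauV_of_ne_zero hc hx (by decide), hsq]
  field_simp
  ring
end
end

section
/- (Weak Young averaging lemma, case α = ∞) Let f ∈ L^1((0,∞)) be nonnegative. Then there exists a constant C > 0, independent of f, such that for all t > 0, (1/t) ∫_0^t (|·|^{-1/2} * f^{3/4})(s) ds ≤ C t^{-1/4} ‖f‖_{L^1}^{3/4}, where (|·|^{-1/2} * g)(s) = ∫_0^s (s-τ)^{-1/2} g(τ) dτ. -/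
/-!
Swapping the order of integration over the triangle `0 < τ ≤ s ≤ t` turns the averaged
Riemann–Liouville integral into `∫₀ᵗ 2 (t - τ)^{1/2} f(τ)^{3/4} dτ ≤ 2 t^{1/2} ∫₀ᵗ f^{3/4}`, and
Hölder's inequality with exponents `4/3` and `4` gives `∫₀ᵗ f^{3/4} ≤ t^{1/4} ‖f‖₁^{3/4}`.
So `C = 2` works, and no weak-type estimate is needed.
-/

open MeasureTheory Set
open scoped ENNReal

theorem lintegral_rpow_le_rpow_lintegral_mul_measure_univ {α : Type*} [MeasurableSpace α]
    (μ : Measure α) {p : ℝ} (hp0 : 0 < p) (hp1 : p < 1) {f : α → ℝ≥0∞} (hf : AEMeasurable f μ) :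
    ∫⁻ x, f x ^ p ∂μ ≤ (∫⁻ x, f x ∂μ) ^ p * μ univ ^ (1 - p) := by
  have hpq : (1 / p).HolderConjugate (1 / (1 - p)) :=
    Real.holderConjugate_iff.mpr ⟨by rw [lt_div_iff₀ hp0]; linarith, by field_simp; ring⟩
  have h := ENNReal.lintegral_mul_le_Lp_mul_Lq μ hpq (hf.pow_const p) aemeasurable_const
    (g := fun _ => 1)
  simpa [← ENNReal.rpow_mul, hp0.ne', (sub_pos.2 hp1).ne'] using h

theorem setLIntegral_Ioc_enorm_sub_rpow {r : ℝ} (hr : -1 < r) {a b : ℝ} (hab : a ≤ b) :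
    ∫⁻ s in Ioc a b, ‖(s - a) ^ r‖ₑ = ENNReal.ofReal ((b - a) ^ (r + 1) / (r + 1)) := by
  have hint : IntegrableOn (fun s => (s - a) ^ r) (Ioc a b) := by
    rw [← intervalIntegrable_iff_integrableOn_Ioc_of_le hab]
    simpa using
      (intervalIntegral.intervalIntegrable_rpow' (a := 0) (b := b - a) hr).comp_sub_right a
  have hnonneg : ∀ s ∈ Ioc a b, 0 ≤ (s - a) ^ r := fun s hs =>
    Real.rpow_nonneg (sub_nonneg.2 hs.1.le) r
  rw [setLIntegral_congr_fun measurableSet_Ioc fun s hs => Real.enorm_of_nonneg (hnonneg s hs),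
    ← ofReal_integral_eq_lintegral_ofReal hint
      ((ae_restrict_iff' measurableSet_Ioc).2 (.of_forall hnonneg)),
    ← intervalIntegral.integral_of_le hab,
    intervalIntegral.integral_comp_sub_right (fun u => u ^ r), integral_rpow (Or.inl hr), sub_self,
    Real.zero_rpow (by linarith), sub_zero]

theorem setLIntegral_Ioc_setLIntegral_Ioc_swap {a b : ℝ} {F : ℝ → ℝ → ℝ≥0∞}
    (hF : AEMeasurable (Function.uncurry F)
      ((volume.restrict (Ioc a b)).prod (volume.restrict (Ioc a b)))) :
    ∫⁻ s in Ioc a b, ∫⁻ τ in Ioc a s, F s τ = ∫⁻ τ in Ioc a b, ∫⁻ s in Ioc τ b, F s τ := by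
  set T : Set (ℝ × ℝ) := {p | p.2 ≤ p.1}
  have hT : MeasurableSet T := measurableSet_le measurable_snd measurable_fst
  calc ∫⁻ s in Ioc a b, ∫⁻ τ in Ioc a s, F s τ
      = ∫⁻ s in Ioc a b, ∫⁻ τ in Ioc a b, T.indicator (Function.uncurry F) (s, τ) := by
        refine setLIntegral_congr_fun measurableSet_Ioc fun s hs => ?_
        have hind : ∀ τ, T.indicator (Function.uncurry F) (s, τ) = (Iic s).indicator (F s) τ :=
          fun τ => by simp [T, indicator_apply]
        simp_rw [hind]
        rw [lintegral_indicator measurableSet_Iic, Measure.restrict_restrict measurableSet_Iic,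
          Iic_inter_Ioc_of_le hs.2]
    _ = ∫⁻ τ in Ioc a b, ∫⁻ s in Ioc a b, T.indicator (Function.uncurry F) (s, τ) :=
        lintegral_lintegral_swap (hF.indicator hT)
    _ = ∫⁻ τ in Ioc a b, ∫⁻ s in Ioc τ b, F s τ := by
        refine setLIntegral_congr_fun measurableSet_Ioc fun τ hτ => ?_
        have hset : Ici τ ∩ Ioc a b = Icc τ b := by
          rw [← Ioi_inter_Iic, ← inter_assoc, inter_eq_left.2 (Ici_subset_Ioi.2 hτ.1),
            Ici_inter_Iic]
        have hind : ∀ s, T.indicator (Function.uncurry F) (s, τ) = (Ici τ).indicator (F · τ) s :=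
          fun s => by simp [T, indicator_apply]
        simp_rw [hind]
        rw [lintegral_indicator measurableSet_Ici, Measure.restrict_restrict measurableSet_Ici,
          hset, Measure.restrict_congr_set Ioc_ae_eq_Icc]

theorem Real.enorm_rpow_le_enorm_rpow (x : ℝ) {y : ℝ} (hy : 0 ≤ y) : ‖x ^ y‖ₑ ≤ ‖x‖ₑ ^ y := by
  rw [Real.enorm_eq_ofReal_abs, Real.enorm_eq_ofReal_abs,
    ENNReal.ofReal_rpow_of_nonneg (abs_nonneg x) hy]
  exact ENNReal.ofReal_le_ofReal (Real.abs_rpow_le_abs_rpow x y)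

theorem enorm_integral_integral_sub_rpow_mul_rpow_le {r p t : ℝ} (hr : -1 < r) (hp0 : 0 < p)
    (hp1 : p < 1) (ht : 0 ≤ t) {f : ℝ → ℝ}
    (hf : AEStronglyMeasurable f (volume.restrict (Ioc 0 t))) :
    ‖∫ s in (0 : ℝ)..t, ∫ τ in (0 : ℝ)..s, (s - τ) ^ r * f τ ^ p‖ₑ
      ≤ ENNReal.ofReal (t ^ (r + 1) / (r + 1) * t ^ (1 - p)) * (∫⁻ τ in Ioc 0 t, ‖f τ‖ₑ) ^ p := by
  have hF : AEMeasurable (Function.uncurry fun s τ => ‖(s - τ) ^ r‖ₑ * ‖f τ‖ₑ ^ p)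
      ((volume.restrict (Ioc 0 t)).prod (volume.restrict (Ioc 0 t))) :=
    (by fun_prop : Measurable fun z : ℝ × ℝ => ‖(z.1 - z.2) ^ r‖ₑ).aemeasurable.mul
      (hf.aemeasurable.enorm.pow_const p).comp_snd
  calc ‖∫ s in (0 : ℝ)..t, ∫ τ in (0 : ℝ)..s, (s - τ) ^ r * f τ ^ p‖ₑ
      ≤ ∫⁻ s in Ioc 0 t, ‖∫ τ in (0 : ℝ)..s, (s - τ) ^ r * f τ ^ p‖ₑ := by
        rw [intervalIntegral.integral_of_le ht]
        exact enorm_integral_le_lintegral_enorm _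
    _ ≤ ∫⁻ s in Ioc 0 t, ∫⁻ τ in Ioc 0 s, ‖(s - τ) ^ r‖ₑ * ‖f τ‖ₑ ^ p := by
        refine setLIntegral_mono' measurableSet_Ioc fun s hs => ?_
        rw [intervalIntegral.integral_of_le hs.1.le]
        refine (enorm_integral_le_lintegral_enorm _).trans (lintegral_mono fun τ => ?_)
        rw [enorm_mul]
        gcongr
        exact Real.enorm_rpow_le_enorm_rpow _ hp0.le
    _ = ∫⁻ τ in Ioc 0 t, ∫⁻ s in Ioc τ t, ‖(s - τ) ^ r‖ₑ * ‖f τ‖ₑ ^ p :=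
        setLIntegral_Ioc_setLIntegral_Ioc_swap hF
    _ ≤ ∫⁻ τ in Ioc 0 t, ENNReal.ofReal (t ^ (r + 1) / (r + 1)) * ‖f τ‖ₑ ^ p := by
        refine setLIntegral_mono' measurableSet_Ioc fun τ hτ => ?_
        rw [lintegral_mul_const' _ _ (by simp [hp0.le]), setLIntegral_Ioc_enorm_sub_rpow hr hτ.2]
        gcongr <;> linarith [hτ.1, hτ.2]
    _ = ENNReal.ofReal (t ^ (r + 1) / (r + 1)) * ∫⁻ τ in Ioc 0 t, ‖f τ‖ₑ ^ p :=
        lintegral_const_mul' _ _ ENNReal.ofReal_ne_top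
    _ ≤ ENNReal.ofReal (t ^ (r + 1) / (r + 1))
          * ((∫⁻ τ in Ioc 0 t, ‖f τ‖ₑ) ^ p * volume (Ioc 0 t) ^ (1 - p)) := by
        gcongr
        simpa using
          lintegral_rpow_le_rpow_lintegral_mul_measure_univ _ hp0 hp1 hf.aemeasurable.enorm
    _ = ENNReal.ofReal (t ^ (r + 1) / (r + 1) * t ^ (1 - p)) * (∫⁻ τ in Ioc 0 t, ‖f τ‖ₑ) ^ p := by
        rw [Real.volume_Ioc, sub_zero, ENNReal.ofReal_rpow_of_nonneg ht (by linarith),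
          ENNReal.ofReal_mul (div_nonneg (by positivity) (by linarith))]
        ring

theorem weak_young_averaging :
    ∃ C > 0, ∀ f : ℝ → ℝ, (∀ s, 0 ≤ f s) → IntegrableOn f (Set.Ioi 0) →
      ∀ t : ℝ, 0 < t →
        (1 / t) * ∫ s in (0 : ℝ)..t,
            (∫ τ in (0 : ℝ)..s, (s - τ) ^ (-(1 / 2 : ℝ)) * (f τ) ^ ((3 : ℝ) / 4))
          ≤ C * t ^ (-(1 / 4 : ℝ)) * (∫ τ in Set.Ioi (0 : ℝ), f τ) ^ ((3 : ℝ) / 4) := by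
  refine ⟨2, two_pos, fun f hf hfi t ht => ?_⟩
  set M := ∫ τ in Ioi (0 : ℝ), f τ
  have hM0 : 0 ≤ M := setIntegral_nonneg measurableSet_Ioi fun τ _ => hf τ
  have hM : ∫⁻ τ in Ioc 0 t, ‖f τ‖ₑ ≤ ENNReal.ofReal M := by
    rw [ofReal_integral_eq_lintegral_ofReal hfi (.of_forall hf)]
    simp_rw [Real.enorm_of_nonneg (hf _)]
    exact lintegral_mono_set Ioc_subset_Ioi_self
  set I := ∫ s in (0 : ℝ)..t, ∫ τ in (0 : ℝ)..s, (s - τ) ^ (-(1 / 2 : ℝ)) * f τ ^ ((3 : ℝ) / 4)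
  have hI := (enorm_integral_integral_sub_rpow_mul_rpow_le (r := -(1 / 2)) (p := 3 / 4)
    (by norm_num) (by norm_num) (by norm_num) ht.le (hfi.1.mono_set Ioc_subset_Ioi_self)).trans
    (mul_le_mul_right (ENNReal.rpow_le_rpow hM (by norm_num : (0 : ℝ) ≤ 3 / 4)) _)
  rw [ENNReal.ofReal_rpow_of_nonneg hM0 (by norm_num : (0 : ℝ) ≤ 3 / 4),
    ← ENNReal.ofReal_mul' (Real.rpow_nonneg hM0 _),
    Real.enorm_eq_ofReal_abs, ENNReal.ofReal_le_ofReal_iff (by positivity)] at hI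
  have hpow : t ^ (-(1 / 2 : ℝ) + 1) / (-(1 / 2) + 1) * t ^ (1 - 3 / 4 : ℝ)
      = 2 * t * t ^ (-(1 / 4 : ℝ)) := by
    rw [div_mul_eq_mul_div, ← Real.rpow_add ht, mul_assoc,
      ← Real.rpow_one_add' ht.le (by norm_num : (1 : ℝ) + -(1 / 4) ≠ 0)]
    norm_num
    ring
  rw [hpow] at hI
  calc 1 / t * I ≤ 1 / t * (2 * t * t ^ (-(1 / 4 : ℝ)) * M ^ ((3 : ℝ) / 4)) := by
        gcongr
        exact (le_abs_self I).trans hI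
    _ = 2 * t ^ (-(1 / 4 : ℝ)) * M ^ ((3 : ℝ) / 4) := by
        field_simp
end
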